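/- If Δ(i,i)·Δ(i,t) < 0 (the training gradient is negatively correlated with the test gradient), then for every learning rate 0 < μ < 2|Δ(i,i)·Δ(i,t)|/‖Δ(i,i)X(t)‖² (taking the bound as +∞ if Δ(i,i)X(t)=0), the test error strictly increases: ‖e(i,t) − μΔ(i,i)X(t)‖² > ‖e(i,t)‖². -/
import Mathlib


open Matrix Finset

/-- Dot product of two row vectors. -/
def dotR {d : ℕ} (a b : Matrix (Fin 1) (Fin d) ℝ) : ℝ := ∑ k, a 0 k * b 0 k

/-- Squared Euclidean norm of a row vector. -/
def sqNorm {N : ℕ} (a : Matrix (Fin 1) (Fin N) ℝ) : ℝ := ∑ n, (a 0 n) ^ 2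

/-- If the training gradient is negatively correlated with the test gradient
(`Δii · (e Xᵀ) < 0`), then for every learning rate `μ > 0` with
`μ ‖Δii X‖² < 2 |Δii · (e Xᵀ)|` (which covers the bound `+∞` when `Δii X = 0`),
the test error strictly increases. -/
theorem stmt_9 {d N : ℕ} (e : Matrix (Fin 1) (Fin N) ℝ)
    (X : Matrix (Fin d) (Fin N) ℝ) (Δii : Matrix (Fin 1) (Fin d) ℝ)
    (hneg : dotR Δii (e * Xᵀ) < 0) :
    ∀ μ : ℝ, 0 < μ → μ * sqNorm (Δii * X) < 2 * |dotR Δii (e * Xᵀ)| →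
      sqNorm e < sqNorm (e - μ • (Δii * X)) := by
  intro μ hμ _
  have h1 : dotR Δii (e * Xᵀ) = ∑ n, e 0 n * (Δii * X) 0 n := by
    simp only [dotR, Matrix.mul_apply, Matrix.transpose_apply, Finset.mul_sum]
    rw [Finset.sum_comm]
    exact Finset.sum_congr rfl fun n _ => Finset.sum_congr rfl fun k _ => by ring
  have key : sqNorm (e - μ • (Δii * X)) =
      sqNorm e - 2 * μ * dotR Δii (e * Xᵀ) + μ ^ 2 * sqNorm (Δii * X) := by
    simp only [sqNorm, h1, Matrix.sub_apply, Matrix.smul_apply, smul_eq_mul,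
      Finset.mul_sum, ← Finset.sum_add_distrib, ← Finset.sum_sub_distrib]
    exact Finset.sum_congr rfl fun n _ => by ring
  rw [key]
  have h2 : 0 ≤ μ ^ 2 * sqNorm (Δii * X) := by
    apply mul_nonneg (sq_nonneg _)
    exact Finset.sum_nonneg fun n _ => sq_nonneg _
  nlinarith
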